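/- arXiv:2407.09764 — 2 statements merged into one kernel-verified Lean document; each statement's English description precedes it below -/
import Mathlib

section
/- Let F be an algebraically closed field of characteristic 2, let m ≥ 1, and let λ = (λ_1, …, λ_{2m+1}) ∈ F^{2m+1} with λ_{2m+1} = 0. Consider the subspace D_λ of derivations ψ of h_m satisfying [g, ψ(g)] = ψ(g^{[2]}) for all g ∈ h_m; this subspace contains all inner derivations. Then the quotient space D_λ / Inn(h_m) (which is the restricted cohomology H¹_*(h_m^λ(2), h_m^λ(2))) has dimension 2m² − m + 1 over F. -/
/-!
The bracket of `h_m` is `⁅x, y⁆ = ω(x, y) z` for the standard symplectic form `ω`, and in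
characteristic 2 `ω` is the polar form of the quadratic form `q` defining the `[2]`-map.
Hence for a derivation `ψ` the map `g ↦ ⁅g, ψ g⁆ - q(g) ψ(z)` is additive and `2`-homogeneous,
so the restrictedness condition only has to be checked on basis vectors.

A derivation preserves the centre, `ψ z = c z`, and the Leibniz rule on pairs of basis vectors
says that, in the basis `e_1, …, e_{2m}`, its matrix is `[[A, B], [C, Aᵀ + c]]` with `B`, `C`
symmetric; restrictedness prescribes the diagonals of `B` and `C` in terms of `c` and `λ`. The
remaining `z`-coordinates of `ψ` on the basis are exactly those of an inner derivation. So the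
quotient is parametrised by `A`, `c` and the off-diagonal parts of `B` and `C`, i.e. by
`m² + 1 + 2·(m choose 2) = 2m² - m + 1` scalars.
-/

open Module

namespace Heisenberg

section Indices

variable {m : ℕ}

def lo (a : Fin m) : Fin (2 * m + 1) := ⟨a, by have := a.isLt; omega⟩

def hi (a : Fin m) : Fin (2 * m + 1) := ⟨m + a, by have := a.isLt; omega⟩

@[simp] lemma val_lo (a : Fin m) : (lo a : ℕ) = a := rfl

@[simp] lemma val_hi (a : Fin m) : (hi a : ℕ) = m + a := rfl

@[simp] lemma lo_inj {a k : Fin m} : lo a = lo k ↔ a = k := by simp [Fin.ext_iff]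

@[simp] lemma hi_inj {a k : Fin m} : hi a = hi k ↔ a = k := by simp [Fin.ext_iff]

@[simp] lemma lo_ne_hi (a k : Fin m) : lo a ≠ hi k := by simp [Fin.ext_iff]; omega

@[simp] lemma hi_ne_lo (a k : Fin m) : hi a ≠ lo k := (lo_ne_hi k a).symm

@[simp] lemma lo_ne_last (a : Fin m) : lo a ≠ Fin.last (2 * m) := by simp [Fin.ext_iff]; omega

@[simp] lemma hi_ne_last (a : Fin m) : hi a ≠ Fin.last (2 * m) := by simp [Fin.ext_iff]; omega

def indexEquiv : (Fin m ⊕ Fin m) ⊕ Unit ≃ Fin (2 * m + 1) :=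
  ((Equiv.sumCongr finSumFinEquiv (Equiv.ofUnique Unit (Fin 1))).trans finSumFinEquiv).trans
    (finCongr (by omega))

@[simp] lemma indexEquiv_inl_inl (a : Fin m) : indexEquiv (.inl (.inl a)) = lo a := by
  simp [indexEquiv, Fin.ext_iff]

@[simp] lemma indexEquiv_inl_inr (a : Fin m) : indexEquiv (.inl (.inr a)) = hi a := by
  simp [indexEquiv, Fin.ext_iff]; omega

@[simp] lemma indexEquiv_inr (u : Unit) : indexEquiv (.inr u) = Fin.last (2 * m) := by
  simp [indexEquiv, Fin.ext_iff]

@[simp] lemma indexEquiv_symm_lo (a : Fin m) : indexEquiv.symm (lo a) = .inl (.inl a) :=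
  indexEquiv.symm_apply_eq.2 (indexEquiv_inl_inl a).symm

@[simp] lemma indexEquiv_symm_hi (a : Fin m) : indexEquiv.symm (hi a) = .inl (.inr a) :=
  indexEquiv.symm_apply_eq.2 (indexEquiv_inl_inr a).symm

@[simp] lemma indexEquiv_symm_last : indexEquiv.symm (Fin.last (2 * m)) = .inr () :=
  indexEquiv.symm_apply_eq.2 (indexEquiv_inr ()).symm

lemma index_induction {motive : Fin (2 * m + 1) → Prop} (lo : ∀ a, motive (lo a))
    (hi : ∀ a, motive (hi a)) (last : motive (Fin.last (2 * m))) (i : Fin (2 * m + 1)) :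
    motive i := by
  obtain ⟨(a | a) | u, rfl⟩ := indexEquiv.surjective i <;> simp [*]

lemma sum_univ_lo_hi_last {M : Type*} [AddCommMonoid M] (f : Fin (2 * m + 1) → M) :
    ∑ i, f i = ∑ a, f (lo a) + ∑ a, f (hi a) + f (Fin.last (2 * m)) := by
  simp [← indexEquiv.sum_comp, Fintype.sum_sum_type]

end Indices

section SymmetricMatrix

variable {n F : Type*} [LinearOrder n]

abbrev OffDiag (n : Type*) := {s : Sym2 n // ¬s.IsDiag}

def symmOfOffDiag (d : n → F) (t : OffDiag n → F) (a k : n) : F :=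
  if h : a = k then d a else t ⟨s(a, k), by simpa using h⟩

def offDiagPart (f : n → n → F) (s : OffDiag n) : F := f s.1.inf s.1.sup

@[simp] lemma symmOfOffDiag_self (d : n → F) (t : OffDiag n → F) (a : n) :
    symmOfOffDiag d t a a = d a :=
  dif_pos rfl

lemma symmOfOffDiag_comm (d : n → F) (t : OffDiag n → F) (a k : n) :
    symmOfOffDiag d t a k = symmOfOffDiag d t k a := by
  by_cases h : a = k
  · rw [h]
  · simp only [symmOfOffDiag, dif_neg h, dif_neg (Ne.symm h), Sym2.eq_swap]

lemma offDiagPart_symmOfOffDiag (d : n → F) (t : OffDiag n → F) :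
    offDiagPart (symmOfOffDiag d t) = t := by
  funext ⟨s, hs⟩
  induction s using Sym2.ind with | h a k => ?_
  have hak : a ≠ k := by simpa using hs
  rcases le_total a k with h | h
  · simp [offDiagPart, symmOfOffDiag, h, hak]
  · simp [offDiagPart, symmOfOffDiag, h, hak.symm, Sym2.eq_swap]

lemma symmOfOffDiag_offDiagPart {f : n → n → F} (hf : ∀ a k, f a k = f k a) :
    symmOfOffDiag (fun a => f a a) (offDiagPart f) = f := by
  funext a k
  by_cases hak : a = k
  · simp [hak]
  rcases le_total a k with h | h
  · simp [symmOfOffDiag, offDiagPart, hak, h]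
  · simp [symmOfOffDiag, offDiagPart, hak, h, hf a k]

lemma eq_zero_of_offDiagPart_eq_zero [Zero F] {f : n → n → F} (hf : ∀ a k, f a k = f k a)
    (hdiag : ∀ a, f a a = 0) (hoff : offDiagPart f = 0) : f = 0 := by
  rw [← symmOfOffDiag_offDiagPart hf]
  funext a k
  simp [symmOfOffDiag, hdiag, hoff]

end SymmetricMatrix

section LieAlgebra

variable {ι F L : Type*} [Field F] [LieRing L] [LieAlgebra F L]

lemma neg_eq_self_of_charTwo [CharP F 2] (v : L) : -v = v := by
  rw [← neg_one_smul F v, CharTwo.neg_eq, one_smul]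

theorem forall_lie_apply_self_iff_basis [CharP F 2] (b : Basis ι F L) (z : L) (q : L → F)
    (hq : ∀ x y, ⁅x, y⁆ = QuadraticMap.polar q x y • z)
    (hq_smul : ∀ (a : F) x, q (a • x) = a ^ 2 * q x) (ψ : LieDerivation F L L) :
    (∀ g, ⁅g, ψ g⁆ = q g • ψ z) ↔ ∀ i, ⁅b i, ψ (b i)⁆ = q (b i) • ψ z := by
  refine ⟨fun h i => h (b i), fun h g => sub_eq_zero.mp ?_⟩
  set R : L → L := fun g => ⁅g, ψ g⁆ - q g • ψ z
  have hadd (x y : L) : R (x + y) = R x + R y := by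
    have hleib := ψ.apply_lie_eq_add x y
    rw [hq, map_smul] at hleib
    have hskew : ⁅y, ψ x⁆ = ⁅ψ x, y⁆ := by
      rw [← lie_skew, neg_eq_self_of_charTwo (F := F)]
    have hqadd : q (x + y) = QuadraticMap.polar q x y + q x + q y := by
      simp only [QuadraticMap.polar]; ring
    simp only [R, map_add, add_lie, lie_add, hqadd, add_smul, hskew, hleib]
    abel
  have hsmul (a : F) (x : L) : R (a • x) = a ^ 2 • R x := by
    simp only [R, map_smul, smul_lie, lie_smul, hq_smul, smul_sub, smul_smul, pow_two]
  refine Submodule.span_induction (p := fun x _ => R x = 0) ?_ ?_ (fun x y _ _ hx hy => ?_)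
    (fun a x _ hx => ?_) (b.mem_span g)
  · rintro _ ⟨i, rfl⟩
    exact sub_eq_zero.mpr (h i)
  · simpa using hsmul 0 0
  · rw [hadd, hx, hy, add_zero]
  · rw [hsmul, hx, smul_zero]

lemma apply_lie_of_basis [Fintype ι] (b : Basis ι F L) (f : L →ₗ[F] L)
    (h : ∀ i j, f ⁅b i, b j⁆ = ⁅f (b i), b j⁆ + ⁅b i, f (b j)⁆) (x y : L) :
    f ⁅x, y⁆ = ⁅f x, y⁆ + ⁅x, f y⁆ := by
  rw [← b.sum_repr x, ← b.sum_repr y]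
  simp only [sum_lie, lie_sum, smul_lie, lie_smul, map_sum, map_smul, h, smul_add,
    Finset.sum_add_distrib]

lemma repr_toLin_basis [Fintype ι] [DecidableEq ι] (b : Basis ι F L) (M : Matrix ι ι F)
    (i j : ι) : b.repr (Matrix.toLin b b M (b j)) i = M i j := by
  rw [← LinearMap.toMatrix_apply, LinearMap.toMatrix_toLin]

end LieAlgebra

section Bracket

variable {F L : Type*} [Field F] [LieRing L] [LieAlgebra F L] {m : ℕ}

def IsHeisenbergBasis (b : Basis (Fin (2 * m + 1)) F L) : Prop :=
  ∀ i j : Fin (2 * m + 1), ⁅b i, b j⁆ =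
    if (j : ℕ) = (i : ℕ) + m ∧ (i : ℕ) < m then b (Fin.last (2 * m))
    else if (i : ℕ) = (j : ℕ) + m ∧ (j : ℕ) < m then -b (Fin.last (2 * m))
    else 0

noncomputable def symplecticForm (b : Basis (Fin (2 * m + 1)) F L) (x y : L) : F :=
  ∑ a, (b.repr x (lo a) * b.repr y (hi a) - b.repr x (hi a) * b.repr y (lo a))

variable {b : Basis (Fin (2 * m + 1)) F L}

lemma smul_last_inj {s t : F} :
    s • b (Fin.last (2 * m)) = t • b (Fin.last (2 * m)) ↔ s = t :=
  (smul_left_injective F (b.ne_zero _)).eq_iff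

lemma eq_repr_last_smul {y : L} (hlo : ∀ a, b.repr y (lo a) = 0)
    (hhi : ∀ a, b.repr y (hi a) = 0) :
    y = b.repr y (Fin.last (2 * m)) • b (Fin.last (2 * m)) := by
  conv_lhs => rw [← b.sum_repr y, sum_univ_lo_hi_last]
  simp [hlo, hhi]

variable (hb : IsHeisenbergBasis b)
include hb

lemma lie_lo_basis (a : Fin m) (i : Fin (2 * m + 1)) :
    ⁅b (lo a), b i⁆ = if i = hi a then b (Fin.last (2 * m)) else 0 := by
  rw [hb]
  split_ifs <;> simp_all [Fin.ext_iff] <;> omega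

lemma lie_hi_basis (a : Fin m) (i : Fin (2 * m + 1)) :
    ⁅b (hi a), b i⁆ = if i = lo a then -b (Fin.last (2 * m)) else 0 := by
  rw [hb]
  split_ifs <;> simp_all [Fin.ext_iff] <;> omega

lemma lie_last_basis (i : Fin (2 * m + 1)) : ⁅b (Fin.last (2 * m)), b i⁆ = 0 := by
  rw [hb]
  simp only [Fin.val_last]
  split_ifs <;> first | rfl | omega

lemma lie_lo_left (a : Fin m) (y : L) :
    ⁅b (lo a), y⁆ = b.repr y (hi a) • b (Fin.last (2 * m)) := by
  conv_lhs => rw [← b.sum_repr y, lie_sum]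
  simp [lie_lo_basis hb]

lemma lie_hi_left (a : Fin m) (y : L) :
    ⁅b (hi a), y⁆ = -(b.repr y (lo a) • b (Fin.last (2 * m))) := by
  conv_lhs => rw [← b.sum_repr y, lie_sum]
  simp [lie_hi_basis hb]

lemma lie_last_left (y : L) : ⁅b (Fin.last (2 * m)), y⁆ = 0 := by
  conv_lhs => rw [← b.sum_repr y, lie_sum]
  simp [lie_last_basis hb]

lemma lie_lo_right (a : Fin m) (y : L) :
    ⁅y, b (lo a)⁆ = -(b.repr y (hi a) • b (Fin.last (2 * m))) := by
  rw [← lie_skew, lie_lo_left hb]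

lemma lie_hi_right (a : Fin m) (y : L) :
    ⁅y, b (hi a)⁆ = b.repr y (lo a) • b (Fin.last (2 * m)) := by
  rw [← lie_skew, lie_hi_left hb, neg_neg]

lemma lie_last_right (y : L) : ⁅y, b (Fin.last (2 * m))⁆ = 0 := by
  rw [← lie_skew, lie_last_left hb, neg_zero]

lemma lie_eq_symplecticForm_smul (x y : L) :
    ⁅x, y⁆ = symplecticForm b x y • b (Fin.last (2 * m)) := by
  conv_lhs => rw [← b.sum_repr x, sum_lie, sum_univ_lo_hi_last]
  simp [lie_lo_left hb, lie_hi_left hb, lie_last_left hb, symplecticForm, Finset.sum_smul,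
    sub_smul, smul_smul, ← sub_eq_add_neg]

lemma eq_repr_last_smul_of_forall_lie {y : L} (h : ∀ x : L, ⁅x, y⁆ = 0) :
    y = b.repr y (Fin.last (2 * m)) • b (Fin.last (2 * m)) := by
  refine eq_repr_last_smul (fun a => ?_) (fun a => ?_)
  · simpa [lie_hi_left hb, b.ne_zero] using h (b (hi a))
  · simpa [lie_lo_left hb, b.ne_zero] using h (b (lo a))

end Bracket

section Derivation

variable {F L : Type*} [Field F] [LieRing L] [LieAlgebra F L] {m : ℕ}

noncomputable def centerScalar (b : Basis (Fin (2 * m + 1)) F L) (ψ : LieDerivation F L L) : F :=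
  b.repr (ψ (b (Fin.last (2 * m)))) (Fin.last (2 * m))

variable {b : Basis (Fin (2 * m + 1)) F L} (hb : IsHeisenbergBasis b) (ψ : LieDerivation F L L)
include hb

lemma apply_last : ψ (b (Fin.last (2 * m))) = centerScalar b ψ • b (Fin.last (2 * m)) :=
  eq_repr_last_smul_of_forall_lie hb fun x => by
    simpa [lie_last_right hb, eq_comm] using ψ.apply_lie_eq_add x (b (Fin.last (2 * m)))

lemma repr_apply_lo_hi_comm (a k : Fin m) :
    b.repr (ψ (b (lo k))) (hi a) = b.repr (ψ (b (lo a))) (hi k) := by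
  have h := congr(b.repr $(ψ.apply_lie_eq_add (b (lo a)) (b (lo k))) (Fin.last (2 * m)))
  simp [lie_lo_basis hb, lie_lo_right hb, lie_lo_left hb] at h
  linear_combination -h

lemma repr_apply_hi_lo_comm (a k : Fin m) :
    b.repr (ψ (b (hi k))) (lo a) = b.repr (ψ (b (hi a))) (lo k) := by
  have h := congr(b.repr $(ψ.apply_lie_eq_add (b (hi a)) (b (hi k))) (Fin.last (2 * m)))
  simp [lie_hi_basis hb, lie_hi_right hb, lie_hi_left hb] at h
  linear_combination h

lemma repr_apply_hi_hi (a k : Fin m) :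
    b.repr (ψ (b (hi k))) (hi a) =
      (if a = k then centerScalar b ψ else 0) - b.repr (ψ (b (lo a))) (lo k) := by
  have h := congr(b.repr $(ψ.apply_lie_eq_add (b (lo a)) (b (hi k))) (Fin.last (2 * m)))
  simp [lie_lo_basis hb, lie_hi_right hb, lie_lo_left hb, apply_ite ψ, apply_last hb,
    apply_ite (fun v => b.repr v (Fin.last (2 * m))), eq_comm] at h
  linear_combination -h

end Derivation

section Restricted

variable {F L : Type*} [Field F] [LieRing L] [LieAlgebra F L] {m : ℕ}

noncomputable def quadForm (b : Basis (Fin (2 * m + 1)) F L) (lam : Fin (2 * m + 1) → F)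
    (g : L) : F :=
  ∑ i, b.repr g i ^ 2 * lam i + ∑ a, b.repr g (lo a) * b.repr g (hi a)

def restrictedDerivations (b : Basis (Fin (2 * m + 1)) F L) (lam : Fin (2 * m + 1) → F) :
    Submodule F (LieDerivation F L L) where
  carrier := {ψ | ∀ g, ⁅g, ψ g⁆ = quadForm b lam g • ψ (b (Fin.last (2 * m)))}
  add_mem' hψ hφ g := by simp [hψ g, hφ g]
  zero_mem' g := by simp
  smul_mem' a ψ hψ g := by simp [hψ g, smul_comm a]

variable {b : Basis (Fin (2 * m + 1)) F L} {lam : Fin (2 * m + 1) → F}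

lemma quadForm_smul (a : F) (x : L) : quadForm b lam (a • x) = a ^ 2 * quadForm b lam x := by
  simp only [quadForm, map_smul, Finsupp.smul_apply, smul_eq_mul, mul_add, Finset.mul_sum]
  congr 1 <;> refine Finset.sum_congr rfl fun _ _ => by ring

lemma quadForm_basis (i : Fin (2 * m + 1)) : quadForm b lam (b i) = lam i := by
  simp [quadForm, Finsupp.single_apply]
  exact Finset.sum_eq_zero fun a _ => by split_ifs <;> simp_all

lemma polar_quadForm [CharP F 2] (x y : L) :
    QuadraticMap.polar (quadForm b lam) x y = symplecticForm b x y := by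
  have hsq : ∑ i, (b.repr x i + b.repr y i) ^ 2 * lam i =
      ∑ i, b.repr x i ^ 2 * lam i + ∑ i, b.repr y i ^ 2 * lam i := by
    rw [← Finset.sum_add_distrib]
    refine Finset.sum_congr rfl fun i _ => ?_
    linear_combination b.repr x i * b.repr y i * lam i * (CharTwo.two_eq_zero : (2 : F) = 0)
  have hpair : ∑ a, (b.repr x (lo a) + b.repr y (lo a)) * (b.repr x (hi a) + b.repr y (hi a)) =
      ∑ a, b.repr x (lo a) * b.repr x (hi a) + ∑ a, b.repr y (lo a) * b.repr y (hi a) +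
        symplecticForm b x y := by
    rw [symplecticForm, ← Finset.sum_add_distrib, ← Finset.sum_add_distrib]
    refine Finset.sum_congr rfl fun a _ => ?_
    linear_combination b.repr x (hi a) * b.repr y (lo a) * (CharTwo.two_eq_zero : (2 : F) = 0)
  simp only [QuadraticMap.polar, quadForm, map_add, Finsupp.add_apply, hsq, hpair]
  ring

variable (hb : IsHeisenbergBasis b)
include hb

lemma range_inner_le_restrictedDerivations :
    LinearMap.range (LieDerivation.inner F L L) ≤ restrictedDerivations b lam := by
  rintro _ ⟨y, rfl⟩ g
  simp [lie_eq_symplecticForm_smul hb g y, lie_last_left hb, lie_last_right hb]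

variable [CharP F 2]

lemma mem_restrictedDerivations_iff (ψ : LieDerivation F L L) :
    ψ ∈ restrictedDerivations b lam ↔
      ∀ i, ⁅b i, ψ (b i)⁆ = lam i • ψ (b (Fin.last (2 * m))) := by
  have h := forall_lie_apply_self_iff_basis b _ (quadForm b lam)
    (fun x y => by rw [polar_quadForm, lie_eq_symplecticForm_smul hb]) quadForm_smul ψ
  simp only [quadForm_basis] at h
  exact h

lemma repr_apply_lo_hi_self {ψ : LieDerivation F L L} (hψ : ψ ∈ restrictedDerivations b lam)
    (a : Fin m) : b.repr (ψ (b (lo a))) (hi a) = lam (lo a) * centerScalar b ψ := by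
  simpa [lie_lo_left hb, apply_last hb, smul_smul, smul_last_inj] using
    (mem_restrictedDerivations_iff hb ψ).1 hψ (lo a)

lemma repr_apply_hi_lo_self {ψ : LieDerivation F L L} (hψ : ψ ∈ restrictedDerivations b lam)
    (a : Fin m) : b.repr (ψ (b (hi a))) (lo a) = lam (hi a) * centerScalar b ψ := by
  simpa [lie_hi_left hb, apply_last hb, smul_smul, smul_last_inj,
    neg_eq_self_of_charTwo (F := F)] using (mem_restrictedDerivations_iff hb ψ).1 hψ (hi a)

end Restricted

abbrev Params (m : ℕ) (F : Type*) :=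
  (Fin m → Fin m → F) × F × (OffDiag (Fin m) → F) × (OffDiag (Fin m) → F)

theorem finrank_params (m : ℕ) (F : Type*) [Field F] :
    finrank F (Params m F) = 2 * m ^ 2 - m + 1 := by
  have hchoose : 2 * m.choose 2 = m * (m - 1) := by
    rw [Nat.choose_two_right, Nat.mul_div_cancel' (Nat.even_mul_pred_self m).two_dvd]
  simp only [Module.finrank_prod, Module.finrank_pi_fintype, Module.finrank_self,
    Fintype.card_fin, Sym2.card_subtype_not_diag, Finset.sum_const, Finset.card_univ, smul_eq_mul]
  obtain _ | n := m
  · rfl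
  · have hle : n + 1 ≤ 2 * (n + 1) ^ 2 := by nlinarith
    zify [hle] at hchoose ⊢
    push_cast at hchoose ⊢
    linear_combination hchoose

section Coordinates

variable {F L : Type*} [Field F] [LieRing L] [LieAlgebra F L] {m : ℕ}

noncomputable def toParams (b : Basis (Fin (2 * m + 1)) F L) :
    LieDerivation F L L →ₗ[F] Params m F where
  toFun ψ := (fun a k => b.repr (ψ (b (lo k))) (lo a), centerScalar b ψ,
    offDiagPart fun a k => b.repr (ψ (b (lo k))) (hi a),
    offDiagPart fun a k => b.repr (ψ (b (hi k))) (lo a))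
  map_add' ψ φ := by
    simp only [LieDerivation.add_apply, map_add, Finsupp.add_apply, centerScalar]
    rfl
  map_smul' a ψ := by
    simp only [LieDerivation.smul_apply, map_smul, Finsupp.smul_apply, centerScalar]
    rfl

variable {b : Basis (Fin (2 * m + 1)) F L} (hb : IsHeisenbergBasis b)
include hb

lemma mem_range_inner_of_repr_eq_zero (ψ : LieDerivation F L L)
    (hlo : ∀ j a, b.repr (ψ (b j)) (lo a) = 0) (hhi : ∀ j a, b.repr (ψ (b j)) (hi a) = 0)
    (hlast : ψ (b (Fin.last (2 * m))) = 0) :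
    ψ ∈ LinearMap.range (LieDerivation.inner F L L) := by
  set e : Fin (2 * m + 1) → F := fun j => b.repr (ψ (b j)) (Fin.last (2 * m))
  set y := ∑ k, (e (lo k) • b (hi k) - e (hi k) • b (lo k))
  have hy_lo (a : Fin m) : b.repr y (lo a) = -e (hi a) := by simp [y, Finsupp.single_apply]
  have hy_hi (a : Fin m) : b.repr y (hi a) = e (lo a) := by simp [y, Finsupp.single_apply]
  suffices h : (LieDerivation.inner F L L y : L →ₗ[F] L) = ψ from
    ⟨y, LieDerivation.ext fun g => LinearMap.congr_fun h g⟩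
  refine b.ext fun j => ?_
  change ⁅b j, y⁆ = ψ (b j)
  rw [eq_repr_last_smul (hlo j) (hhi j)]
  induction j using index_induction with
  | lo a => simp [lie_lo_left hb, hy_hi, e]
  | hi a => simp [lie_hi_left hb, hy_lo, e]
  | last => simp [lie_last_left hb, hlast]

theorem toParams_eq_zero_iff [CharP F 2] {lam : Fin (2 * m + 1) → F} {ψ : LieDerivation F L L}
    (hψ : ψ ∈ restrictedDerivations b lam) :
    toParams b ψ = 0 ↔ ψ ∈ LinearMap.range (LieDerivation.inner F L L) := by
  constructor
  · intro h0
    simp only [toParams, LinearMap.coe_mk, AddHom.coe_mk, Prod.mk_eq_zero] at h0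
    obtain ⟨hA, hc, hC, hB⟩ := h0
    have hlast : ψ (b (Fin.last (2 * m))) = 0 := by rw [apply_last hb, hc, zero_smul]
    have hC' := eq_zero_of_offDiagPart_eq_zero (repr_apply_lo_hi_comm hb ψ)
      (fun a => by simp [repr_apply_lo_hi_self hb hψ, hc]) hC
    have hB' := eq_zero_of_offDiagPart_eq_zero (repr_apply_hi_lo_comm hb ψ)
      (fun a => by simp [repr_apply_hi_lo_self hb hψ, hc]) hB
    refine mem_range_inner_of_repr_eq_zero hb ψ (fun j a => ?_) (fun j a => ?_) hlast
    · induction j using index_induction with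
      | lo k => exact congr_fun₂ hA a k
      | hi k => exact congr_fun₂ hB' a k
      | last => simp [hlast]
    · induction j using index_induction with
      | lo k => exact congr_fun₂ hC' a k
      | hi k => simp [repr_apply_hi_hi hb, hc, congr_fun₂ hA k a]
      | last => simp [hlast]
  · rintro ⟨y, rfl⟩
    simp [toParams, centerScalar, lie_lo_left hb, lie_hi_left hb, lie_last_left hb]
    exact ⟨rfl, rfl⟩

end Coordinates

section Construction

variable {F L : Type*} [Field F] [LieRing L] [LieAlgebra F L] {m : ℕ}

def paramMatrix (lam : Fin (2 * m + 1) → F) (A : Fin m → Fin m → F) (c : F)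
    (t t' : OffDiag (Fin m) → F) : Matrix (Fin (2 * m + 1)) (Fin (2 * m + 1)) F :=
  Matrix.reindex indexEquiv indexEquiv <|
    Matrix.fromBlocks
      (Matrix.fromBlocks (Matrix.of A) (Matrix.of (symmOfOffDiag (fun a => lam (hi a) * c) t'))
        (Matrix.of (symmOfOffDiag (fun a => lam (lo a) * c) t)) ((Matrix.of A).transpose + c • 1))
      0 0 (Matrix.of fun _ _ => c)

noncomputable def paramMap (b : Basis (Fin (2 * m + 1)) F L) (lam : Fin (2 * m + 1) → F)
    (A : Fin m → Fin m → F) (c : F) (t t' : OffDiag (Fin m) → F) : L →ₗ[F] L :=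
  Matrix.toLin b b (paramMatrix lam A c t t')

variable {b : Basis (Fin (2 * m + 1)) F L} {lam : Fin (2 * m + 1) → F} {A : Fin m → Fin m → F}
  {c : F} {t t' : OffDiag (Fin m) → F}

@[simp] lemma paramMatrix_lo_lo (a k : Fin m) :
    paramMatrix lam A c t t' (lo a) (lo k) = A a k := by
  simp [paramMatrix]

@[simp] lemma paramMatrix_lo_hi (a k : Fin m) :
    paramMatrix lam A c t t' (lo a) (hi k) = symmOfOffDiag (fun a => lam (hi a) * c) t' a k := by
  simp [paramMatrix]

@[simp] lemma paramMatrix_hi_lo (a k : Fin m) :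
    paramMatrix lam A c t t' (hi a) (lo k) = symmOfOffDiag (fun a => lam (lo a) * c) t a k := by
  simp [paramMatrix]

@[simp] lemma paramMatrix_hi_hi (a k : Fin m) :
    paramMatrix lam A c t t' (hi a) (hi k) = A k a + if a = k then c else 0 := by
  simp [paramMatrix, Matrix.one_apply]

@[simp] lemma paramMatrix_lo_last (a : Fin m) :
    paramMatrix lam A c t t' (lo a) (Fin.last (2 * m)) = 0 := by
  simp [paramMatrix]

@[simp] lemma paramMatrix_hi_last (a : Fin m) :
    paramMatrix lam A c t t' (hi a) (Fin.last (2 * m)) = 0 := by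
  simp [paramMatrix]

@[simp] lemma paramMatrix_last_last :
    paramMatrix lam A c t t' (Fin.last (2 * m)) (Fin.last (2 * m)) = c := by
  simp [paramMatrix]

@[simp] lemma repr_paramMap_basis (i j : Fin (2 * m + 1)) :
    b.repr (paramMap b lam A c t t' (b j)) i = paramMatrix lam A c t t' i j :=
  repr_toLin_basis b _ i j

lemma paramMap_last :
    paramMap b lam A c t t' (b (Fin.last (2 * m))) = c • b (Fin.last (2 * m)) := by
  rw [eq_repr_last_smul (y := paramMap b lam A c t t' (b (Fin.last (2 * m))))
    (fun a => by rw [repr_paramMap_basis, paramMatrix_lo_last])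
    (fun a => by rw [repr_paramMap_basis, paramMatrix_hi_last]), repr_paramMap_basis,
    paramMatrix_last_last]

variable (lam A c t t') [CharP F 2] (hb : IsHeisenbergBasis b)
include hb

lemma paramMap_lie_basis (i j : Fin (2 * m + 1)) :
    paramMap b lam A c t t' ⁅b i, b j⁆ =
      ⁅paramMap b lam A c t t' (b i), b j⁆ + ⁅b i, paramMap b lam A c t t' (b j)⁆ := by
  -- the nine cases come down to the symmetry of the two off-diagonal blocks and to `A + A = 0`
  induction i using index_induction <;> induction j using index_induction <;>
  simp [lie_lo_basis hb, lie_hi_basis hb, lie_last_basis hb, lie_lo_left hb, lie_hi_left hb,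
    lie_last_left hb, lie_lo_right hb, lie_hi_right hb, lie_last_right hb,
    apply_ite (paramMap b lam A c t t'), paramMap_last, neg_eq_self_of_charTwo (F := F),
    ← add_smul, CharTwo.add_self_eq_zero, symmOfOffDiag_comm, ite_smul, add_comm (A _ _),
    CharTwo.add_cancel_right, eq_comm]

noncomputable def paramDerivation : LieDerivation F L L where
  toLinearMap := paramMap b lam A c t t'
  leibniz' x y := by
    rw [apply_lie_of_basis b _ (paramMap_lie_basis lam A c t t' hb) x y, ← lie_skew y]
    abel

lemma paramDerivation_mem (hlam : lam (Fin.last (2 * m)) = 0) :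
    paramDerivation lam A c t t' hb ∈ restrictedDerivations b lam := by
  rw [mem_restrictedDerivations_iff hb]
  intro i
  induction i using index_induction <;>
  simp [paramDerivation, lie_lo_left hb, lie_hi_left hb, lie_last_left hb, paramMap_last, hlam,
    smul_smul, mul_comm, neg_eq_self_of_charTwo (F := F)]

lemma toParams_paramDerivation :
    toParams b (paramDerivation lam A c t t' hb) = (A, c, t, t') := by
  simp [toParams, paramDerivation, centerScalar, paramMap_last, offDiagPart_symmOfOffDiag]

end Construction

section Quotient

variable {F L : Type*} [Field F] [CharP F 2] [LieRing L] [LieAlgebra F L] {m : ℕ}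
  {b : Basis (Fin (2 * m + 1)) F L} {lam : Fin (2 * m + 1) → F} (hb : IsHeisenbergBasis b)
include hb

theorem ker_toParams_comp_subtype :
    LinearMap.ker ((toParams b).comp (restrictedDerivations b lam).subtype) =
      (LinearMap.range (LieDerivation.inner F L L)).comap
        (restrictedDerivations b lam).subtype := by
  ext ψ
  exact toParams_eq_zero_iff hb ψ.2

theorem toParams_comp_subtype_surjective (hlam : lam (Fin.last (2 * m)) = 0) :
    Function.Surjective ((toParams b).comp (restrictedDerivations b lam).subtype) := by
  rintro ⟨A, c, t, t'⟩
  exact ⟨⟨_, paramDerivation_mem lam A c t t' hb hlam⟩,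
    toParams_paramDerivation lam A c t t' hb⟩

theorem finrank_restrictedDerivations_quot_inner (hlam : lam (Fin.last (2 * m)) = 0) :
    finrank F (restrictedDerivations b lam ⧸
      (LinearMap.range (LieDerivation.inner F L L)).comap (restrictedDerivations b lam).subtype) =
      2 * m ^ 2 - m + 1 := by
  rw [← ker_toParams_comp_subtype hb,
    (LinearMap.quotKerEquivOfSurjective _ (toParams_comp_subtype_surjective hb hlam)).finrank_eq,
    finrank_params]

end Quotient

end Heisenberg

/-- Let `F` be an algebraically closed field of characteristic `2`, let
`m ≥ 1`, and let `λ ∈ F^{2m+1}` with `λ_{2m+1} = 0`.  The restricted `[2]`-map on `h_m`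
determined by `λ` is `g^{[2]} = (Σ_i a_i² λ_i + Σ_{j=1}^m a_j a_{m+j}) e_{2m+1}` for
`g = Σ_i a_i e_i`.  Consider the subspace `D_λ` of derivations `ψ` of `h_m` satisfying
`[g, ψ(g)] = ψ(g^{[2]})` for all `g`; this subspace contains all inner derivations.  Then
`D_λ / Inn(h_m) = H¹_*(h_m^λ(2), h_m^λ(2))` has dimension `2m² − m + 1` over `F`. -/
theorem heisenberg_restricted_H1_dim_char_two_lam_zero
    (F : Type*) [Field F] [CharP F 2]
    (m : ℕ)
    (L : Type*) [LieRing L] [LieAlgebra F L]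
    (b : Module.Basis (Fin (2*m+1)) F L)
    (hb : ∀ i j : Fin (2*m+1), ⁅b i, b j⁆ =
      if (j : ℕ) = (i : ℕ) + m ∧ (i : ℕ) < m then b (Fin.last (2*m))
      else if (i : ℕ) = (j : ℕ) + m ∧ (j : ℕ) < m then - b (Fin.last (2*m))
      else 0)
    (lam : Fin (2*m+1) → F) (hlam : lam (Fin.last (2*m)) = 0)
    (P : L → L)
    (hP : ∀ g : L, P g =
      (∑ i, (b.repr g i)^2 * lam i +
        ∑ j : Fin m, b.repr g ⟨(j : ℕ), by omega⟩ * b.repr g ⟨m + (j : ℕ), by omega⟩) •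
      b (Fin.last (2*m)))
    (Dlam : Submodule F (LieDerivation F L L))
    (hD : ∀ ψ : LieDerivation F L L, ψ ∈ Dlam ↔
      ∀ g : L, ⁅g, ψ g⁆ = ψ (P g))
    (Inn : Submodule F (LieDerivation F L L))
    (hInn : ∀ D : LieDerivation F L L, D ∈ Inn ↔ ∃ h : L, ∀ g : L, D g = ⁅h, g⁆) :
    Inn ≤ Dlam ∧
    Module.finrank F (↥Dlam ⧸ Submodule.comap Dlam.subtype Inn) = 2*m^2 - m + 1 := by
  obtain rfl : Dlam = Heisenberg.restrictedDerivations b lam := by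
    ext ψ
    rw [hD]
    exact forall_congr' fun g => by rw [hP g, map_smul]; rfl
  obtain rfl : Inn = LinearMap.range (LieDerivation.inner F L L) := by
    ext D
    rw [hInn, LinearMap.mem_range]
    constructor
    · rintro ⟨h, hD⟩
      exact ⟨-h, LieDerivation.ext fun g => by
        rw [LieDerivation.inner_apply_apply, hD, lie_neg, lie_skew]⟩
    · rintro ⟨y, rfl⟩
      exact ⟨-y, fun g => by rw [LieDerivation.inner_apply_apply, neg_lie, lie_skew]⟩
  exact ⟨Heisenberg.range_inner_le_restrictedDerivations hb,
    Heisenberg.finrank_restrictedDerivations_quot_inner hb hlam⟩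
end

section
/- For m = 1 and every field F, the second adjoint cohomology space H²(h_1, h_1), i.e. the quotient of the space of 2-cocycles by the space of 2-coboundaries, has dimension 5 over F. -/
/-!
Let `x, y, z` be the basis of `h₁`, with `⁅x, y⁆ = z` and `z` central. An alternating bilinear map
is determined by its values at `(x, y)`, `(x, z)`, `(y, z)`, and these can be prescribed freely;
for such a map the cocycle identity imposes exactly one linear condition, namely that the
`z`-component of the identity at `(x, y, z)` vanishes: `φ(x, z)ₓ + φ(y, z)ᵧ = 0`. So the cocycles
form a space of dimension `9 - 1 = 8`. A coboundary `d¹ψ` has `d¹ψ(x, z) = -d¹ψ(x, y)ᵧ • z` and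
`d¹ψ(y, z) = d¹ψ(x, y)ₓ • z`, so it is determined by the arbitrary value `d¹ψ(x, y)`, and the
coboundaries form a space of dimension `3`. Hence `dim H² = 8 - 3 = 5`.
-/

open Module

theorem isLinearMap_of_map_smul_add {R M N : Type*} [Semiring R] [AddCommMonoid M] [Module R M]
    [AddCommGroup N] [Module R N] {f : M → N} (h : ∀ (a : R) (x y : M), f (a • x + y) = a • f x + f y) :
    IsLinearMap R f := by
  have map_zero : f 0 = 0 := by simpa using h 1 0 0
  exact ⟨fun x y => by simpa using h 1 x y, fun a x => by simpa [map_zero] using h a x 0⟩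

theorem LinearMap.eq_zero_of_isAlt_of_apply_basis_lt {ι R M N : Type*} [LinearOrder ι]
    [CommSemiring R] [AddCommMonoid M] [Module R M] [AddCommGroup N] [Module R N]
    (b : Basis ι R M) {B : M →ₗ[R] M →ₗ[R] N} (hB : B.IsAlt)
    (h : ∀ i j, i < j → B (b i) (b j) = 0) : B = 0 := by
  refine LinearMap.ext_basis b b fun i j => ?_
  rcases lt_trichotomy i j with hij | rfl | hij
  · exact h i j hij
  · exact hB (b i)
  · rw [← hB.neg, h j i hij, neg_zero, zero_apply, zero_apply]

theorem Submodule.finrank_quotient_comap_subtype_add_finrank {K V : Type*} [DivisionRing K]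
    [AddCommGroup V] [Module K V] {B Z : Submodule K V} [FiniteDimensional K Z] (h : B ≤ Z) :
    finrank K (Z ⧸ B.comap Z.subtype) + finrank K B = finrank K Z := by
  rw [← (Submodule.comapSubtypeEquivOfLe h).finrank_eq]
  exact Submodule.finrank_quotient_add_finrank _

section Cochains

variable (F : Type*) {L : Type*} [CommRing F] [LieRing L] [LieAlgebra F L]

def IsTwoCocycle (φ : L → L → L) : Prop :=
  (∀ (a : F) (x x' y : L), φ (a • x + x') y = a • φ x y + φ x' y) ∧
  (∀ (a : F) (x y y' : L), φ x (a • y + y') = a • φ x y + φ x y') ∧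
  (∀ x : L, φ x x = 0) ∧
  (∀ x y z : L, ⁅x, φ y z⁆ - ⁅y, φ x z⁆ + ⁅z, φ x y⁆
    - φ ⁅x, y⁆ z + φ ⁅x, z⁆ y - φ ⁅y, z⁆ x = 0)

variable {F}

def coboundary (ψ : L →ₗ[F] L) (x y : L) : L := ⁅x, ψ y⁆ - ⁅y, ψ x⁆ - ψ ⁅x, y⁆

variable (F) in
def IsTwoCoboundary (φ : L → L → L) : Prop :=
  ∃ ψ : L →ₗ[F] L, ∀ x y : L, φ x y = coboundary ψ x y

theorem isTwoCocycle_coboundary (ψ : L →ₗ[F] L) : IsTwoCocycle F (coboundary ψ) := by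
  refine ⟨fun a x x' y => ?_, fun a x y y' => ?_, fun x => ?_, fun x y z => ?_⟩
  · simp only [coboundary, add_lie, lie_add, smul_lie, lie_smul, map_add, map_smul, smul_sub]
    abel
  · simp only [coboundary, add_lie, lie_add, smul_lie, lie_smul, map_add, map_smul, smul_sub]
    abel
  · simp [coboundary]
  · have jacobi : ψ ⁅x, ⁅y, z⁆⁆ = -ψ ⁅z, ⁅x, y⁆⁆ + ψ ⁅y, ⁅x, z⁆⁆ := by
      rw [leibniz_lie, ← lie_skew ⁅x, y⁆ z, map_add, map_neg]
    simp only [coboundary, lie_sub, lie_lie, map_sub]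
    simp only [← lie_skew z y, ← lie_skew z x, ← lie_skew y x, lie_neg, map_neg]
    rw [jacobi]
    abel

variable {φ : L → L → L}

theorem IsTwoCoboundary.isTwoCocycle (h : IsTwoCoboundary F φ) : IsTwoCocycle F φ := by
  obtain ⟨ψ, hψ⟩ := h
  obtain rfl : φ = coboundary ψ := funext₂ hψ
  exact isTwoCocycle_coboundary ψ

def IsTwoCocycle.toLinearMap₂ (hφ : IsTwoCocycle F φ) : L →ₗ[F] L →ₗ[F] L :=
  have left (y : L) : IsLinearMap F (φ · y) :=
    isLinearMap_of_map_smul_add fun a x x' => hφ.1 a x x' y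
  have right (x : L) : IsLinearMap F (φ x) :=
    isLinearMap_of_map_smul_add fun a y y' => hφ.2.1 a x y y'
  LinearMap.mk₂ F φ (fun x x' y => (left y).map_add x x') (fun a x y => (left y).map_smul a x)
    (fun x y y' => (right x).map_add y y') (fun a x y => (right x).map_smul a y)

@[simp]
theorem IsTwoCocycle.toLinearMap₂_apply (hφ : IsTwoCocycle F φ) (x y : L) :
    hφ.toLinearMap₂ x y = φ x y :=
  rfl

end Cochains

section Heisenberg

variable {F L : Type*} [CommRing F] [LieRing L] [LieAlgebra F L] (b : Basis (Fin 3) F L)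

def IsHeisenbergBasis : Prop :=
  ⁅b 0, b 1⁆ = b 2 ∧ ⁅b 0, b 2⁆ = 0 ∧ ⁅b 1, b 2⁆ = 0

variable {b}

theorem IsHeisenbergBasis.lie_eq (hb : IsHeisenbergBasis b) (x y : L) :
    ⁅x, y⁆ = (b.coord 0 x * b.coord 1 y - b.coord 1 x * b.coord 0 y) • b 2 := by
  obtain ⟨h01, h02, h12⟩ := hb
  conv_lhs => rw [← b.sum_repr x, ← b.sum_repr y]
  simp only [Fin.sum_univ_three, add_lie, lie_add, smul_lie, lie_smul, lie_self, h01, h02, h12,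
    ← lie_skew (b 1) (b 0), ← lie_skew (b 2) (b 0), ← lie_skew (b 2) (b 1), Basis.coord_apply]
  module

variable (b) in
noncomputable def evalPairs : (L → L → L) →ₗ[F] L × L × L where
  toFun φ := (φ (b 0) (b 1), φ (b 0) (b 2), φ (b 1) (b 2))
  map_add' _ _ := rfl
  map_smul' _ _ := rfl

theorem IsTwoCocycle.eq_zero_of_evalPairs_eq_zero {φ : L → L → L} (hφ : IsTwoCocycle F φ)
    (h : evalPairs b φ = 0) : φ = 0 := by
  simp only [evalPairs, LinearMap.coe_mk, AddHom.coe_mk, Prod.mk_eq_zero] at h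
  have := LinearMap.eq_zero_of_isAlt_of_apply_basis_lt b (B := hφ.toLinearMap₂) hφ.2.2.1
    (by intro i j hij; fin_cases i <;> fin_cases j <;> simp_all)
  exact funext₂ fun x y => LinearMap.congr_fun₂ this x y

variable (b) in
noncomputable def cocycleConstraint : L × L × L →ₗ[F] F :=
  b.coord 0 ∘ₗ LinearMap.fst F L L ∘ₗ LinearMap.snd F L (L × L) +
    b.coord 1 ∘ₗ LinearMap.snd F L L ∘ₗ LinearMap.snd F L (L × L)

theorem cocycleConstraint_apply (u v w : L) :
    cocycleConstraint b (u, v, w) = b.coord 0 v + b.coord 1 w :=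
  rfl

theorem IsHeisenbergBasis.cocycleConstraint_evalPairs (hb : IsHeisenbergBasis b)
    {φ : L → L → L} (hφ : IsTwoCocycle F φ) : cocycleConstraint b (evalPairs b φ) = 0 := by
  have map_zero_left (y : L) : φ 0 y = 0 := by simpa using hφ.1 1 0 0 y
  have key := hφ.2.2.2 (b 0) (b 1) (b 2)
  rw [hb.1, hb.2.1, hb.2.2, map_zero_left, map_zero_left, hφ.2.2.1, hb.lie_eq (b 0),
    hb.lie_eq (b 1), hb.lie_eq (b 2)] at key
  simpa [evalPairs, cocycleConstraint_apply, add_comm] using congrArg (b.coord 2) key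

variable (b) in
noncomputable def cochainOfValues (u v w : L) (x y : L) : L :=
  (b.coord 0 x * b.coord 1 y - b.coord 1 x * b.coord 0 y) • u +
    (b.coord 0 x * b.coord 2 y - b.coord 2 x * b.coord 0 y) • v +
    (b.coord 1 x * b.coord 2 y - b.coord 2 x * b.coord 1 y) • w

theorem evalPairs_cochainOfValues (u v w : L) :
    evalPairs b (cochainOfValues b u v w) = (u, v, w) := by
  simp [evalPairs, cochainOfValues]

theorem IsHeisenbergBasis.isTwoCocycle_cochainOfValues (hb : IsHeisenbergBasis b) {u v w : L}
    (h : cocycleConstraint b (u, v, w) = 0) : IsTwoCocycle F (cochainOfValues b u v w) := by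
  rw [cocycleConstraint_apply, b.coord_apply, b.coord_apply, add_eq_zero_iff_eq_neg] at h
  refine ⟨fun a x x' y => ?_, fun a x y y' => ?_, fun x => ?_, fun x y z => ?_⟩
  · simp only [cochainOfValues, map_add, map_smul, smul_eq_mul]
    module
  · simp only [cochainOfValues, map_add, map_smul, smul_eq_mul]
    module
  · simp only [cochainOfValues, mul_comm, sub_self, zero_smul, add_zero]
  · simp only [cochainOfValues, hb.lie_eq, h, Basis.coord_apply, Basis.repr_self, map_add,
      map_smul, smul_eq_mul, Finsupp.single_apply, Fin.reduceEq, if_true, if_false]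
    module

theorem IsHeisenbergBasis.evalPairs_coboundary (hb : IsHeisenbergBasis b) (ψ : L →ₗ[F] L) :
    evalPairs b (coboundary ψ) =
      (coboundary ψ (b 0) (b 1), -b.coord 1 (coboundary ψ (b 0) (b 1)) • b 2,
        b.coord 0 (coboundary ψ (b 0) (b 1)) • b 2) := by
  simp [evalPairs, coboundary, hb.1, hb.2.1, hb.2.2, hb.lie_eq]

theorem IsHeisenbergBasis.coboundary_constr_apply (hb : IsHeisenbergBasis b) (u : L) :
    coboundary (b.constr F ![0, 0, -u]) (b 0) (b 1) = u := by
  simp [coboundary, hb.1]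

end Heisenberg

section Dimension

variable {F L : Type*} [Field F] [LieRing L] [LieAlgebra F L] {b : Basis (Fin 3) F L}

theorem cocycleConstraint_surjective : Function.Surjective (cocycleConstraint b) :=
  fun c => ⟨(0, c • b 0, 0), by simp [cocycleConstraint_apply]⟩

theorem finrank_ker_cocycleConstraint : finrank F (LinearMap.ker (cocycleConstraint b)) = 8 := by
  have := b.finiteDimensional_of_finite
  have rank_nullity := LinearMap.finrank_range_add_finrank_ker (cocycleConstraint b)
  rw [LinearMap.range_eq_top.mpr cocycleConstraint_surjective, finrank_top, finrank_self,
    finrank_prod, finrank_prod, finrank_eq_card_basis b, Fintype.card_fin] at rank_nullity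
  omega

theorem IsHeisenbergBasis.finrank_cocycles (hb : IsHeisenbergBasis b)
    {Z : Submodule F (L → L → L)} (hZ : ∀ φ, φ ∈ Z ↔ IsTwoCocycle F φ) : finrank F Z = 8 := by
  let f : Z →ₗ[F] LinearMap.ker (cocycleConstraint b) :=
    (evalPairs b ∘ₗ Z.subtype).codRestrict _ fun φ => hb.cocycleConstraint_evalPairs ((hZ φ).1 φ.2)
  have hinj : Function.Injective f := by
    refine (injective_iff_map_eq_zero f).2 fun φ hφ => Subtype.ext ?_
    exact ((hZ φ).1 φ.2).eq_zero_of_evalPairs_eq_zero (congrArg Subtype.val hφ)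
  have hsurj : Function.Surjective f := by
    rintro ⟨⟨u, v, w⟩, h⟩
    exact ⟨⟨_, (hZ _).2 (hb.isTwoCocycle_cochainOfValues h)⟩,
      Subtype.ext (evalPairs_cochainOfValues u v w)⟩
  rw [(LinearEquiv.ofBijective f ⟨hinj, hsurj⟩).finrank_eq, finrank_ker_cocycleConstraint]

theorem IsHeisenbergBasis.finrank_coboundaries (hb : IsHeisenbergBasis b)
    {B : Submodule F (L → L → L)} (hB : ∀ φ, φ ∈ B ↔ IsTwoCoboundary F φ) : finrank F B = 3 := by
  let f : B →ₗ[F] L := LinearMap.fst F L (L × L) ∘ₗ evalPairs b ∘ₗ B.subtype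
  have hinj : Function.Injective f := by
    refine (injective_iff_map_eq_zero f).2 fun φ hφ => Subtype.ext ?_
    obtain ⟨ψ, hψ⟩ := (hB φ).1 φ.2
    have h01 : coboundary ψ (b 0) (b 1) = 0 := (hψ _ _).symm.trans hφ
    rw [Submodule.coe_zero, show (φ : L → L → L) = coboundary ψ from funext₂ hψ]
    refine (isTwoCocycle_coboundary ψ).eq_zero_of_evalPairs_eq_zero (b := b) ?_
    simp [hb.evalPairs_coboundary, h01]
  have hsurj : Function.Surjective f := fun u =>
    ⟨⟨_, (hB _).2 ⟨b.constr F ![0, 0, -u], fun _ _ => rfl⟩⟩, hb.coboundary_constr_apply u⟩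
  rw [(LinearEquiv.ofBijective f ⟨hinj, hsurj⟩).finrank_eq, finrank_eq_card_basis b,
    Fintype.card_fin]

end Dimension

/-- For `m = 1` and every field `F`, the second adjoint
cohomology space `H²(h_m, h_m)`, i.e. the quotient of the space of 2-cocycles (alternating
bilinear maps `φ : h_m × h_m → h_m` with
`⁅x,φ(y,z)⁆ − ⁅y,φ(x,z)⁆ + ⁅z,φ(x,y)⁆ − φ(⁅x,y⁆,z) + φ(⁅x,z⁆,y) − φ(⁅y,z⁆,x) = 0`)
by the space of 2-coboundaries (`φ = d¹ψ` where `d¹ψ(x,y) = ⁅x,ψ y⁆ − ⁅y,ψ x⁆ − ψ⁅x,y⁆`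
for an `F`-linear `ψ`), has dimension `5` over `F`. -/
theorem heisenberg_H2_dim_m_eq_one
    (F : Type*) [Field F] (m : ℕ) (hm : m = 1)
    (L : Type*) [LieRing L] [LieAlgebra F L]
    (b : Module.Basis (Fin (2*m+1)) F L)
    (hb : ∀ i j : Fin (2*m+1), ⁅b i, b j⁆ =
      if (j : ℕ) = (i : ℕ) + m ∧ (i : ℕ) < m then b (Fin.last (2*m))
      else if (i : ℕ) = (j : ℕ) + m ∧ (j : ℕ) < m then - b (Fin.last (2*m))
      else 0)
    (Z B : Submodule F (L → L → L))
    (hZ : ∀ φ : L → L → L, φ ∈ Z ↔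
      (∀ (a : F) (x x' y : L), φ (a • x + x') y = a • φ x y + φ x' y) ∧
      (∀ (a : F) (x y y' : L), φ x (a • y + y') = a • φ x y + φ x y') ∧
      (∀ x : L, φ x x = 0) ∧
      (∀ x y z : L, ⁅x, φ y z⁆ - ⁅y, φ x z⁆ + ⁅z, φ x y⁆
        - φ ⁅x, y⁆ z + φ ⁅x, z⁆ y - φ ⁅y, z⁆ x = 0))
    (hB : ∀ φ : L → L → L, φ ∈ B ↔
      ∃ ψ : L →ₗ[F] L, ∀ x y : L, φ x y = ⁅x, ψ y⁆ - ⁅y, ψ x⁆ - ψ ⁅x, y⁆) :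
    Module.finrank F (↥Z ⧸ Submodule.comap Z.subtype B) = 5 := by
  subst hm
  have hH : IsHeisenbergBasis b :=
    ⟨by simpa using hb 0 1, by simpa using hb 0 2, by simpa using hb 1 2⟩
  have hBZ : B ≤ Z := fun φ hφ => (hZ φ).2 (IsTwoCoboundary.isTwoCocycle ((hB φ).1 hφ))
  have hZ8 := hH.finrank_cocycles hZ
  have := Module.finite_of_finrank_eq_succ hZ8
  have := Submodule.finrank_quotient_comap_subtype_add_finrank hBZ
  rw [hZ8, hH.finrank_coboundaries hB] at this
  omega
end
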